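/- For all nonnegative integers n, m, ℓ, h, the number of F-paths Q in F_n with height(Q) = m, north(Q) = ℓ and aone(Q) = h equals the number of F-paths Q in F_n with height(Q) = m, north(Q) = ℓ and bone(Q) − north(Q) = h. -/

import Mathlib

/-- An `F`-step: `(0,1)` or `(a,b)` with `a ≥ 1` and `b ≤ 1`. -/
def IsFStep (s : ℤ × ℤ) : Prop := s = (0, 1) ∨ (1 ≤ s.1 ∧ s.2 ≤ 1)

/-- An `F`-path: a sequence of `F`-steps whose prefix sums satisfy
`a_1 + ⋯ + a_i ≤ b_1 + ⋯ + b_i`. -/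
def IsFPath (Q : List (ℤ × ℤ)) : Prop :=
  (∀ s ∈ Q, IsFStep s) ∧
  ∀ i : ℕ, ((Q.take i).map Prod.fst).sum ≤ ((Q.take i).map Prod.snd).sum

/-- The set of `F`-paths of length `n`. -/
def FPaths (n : ℕ) : Set (List (ℤ × ℤ)) := {Q | Q.length = n ∧ IsFPath Q}

def fheight (Q : List (ℤ × ℤ)) : ℤ := (Q.map Prod.snd).sum - (Q.map Prod.fst).sum

def fnorth (Q : List (ℤ × ℤ)) : ℕ := Q.countP (fun s => decide (s = ((0 : ℤ), (1 : ℤ))))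

def faone (Q : List (ℤ × ℤ)) : ℕ := Q.countP (fun s => decide (s.1 = 1))

def fbone (Q : List (ℤ × ℤ)) : ℕ := Q.countP (fun s => decide (s.2 = 1))

/-- Steps of a Schröder path. -/
inductive SStep : Type
  | u | d | h
deriving DecidableEq

/-- The width of a Schröder step. -/
def swidth : SStep → ℕ
  | .u => 1
  | .d => 1
  | .h => 2

/-- The height-change of a Schröder step. -/
def shc : SStep → ℤ
  | .u => 1
  | .d => -1
  | .h => 0

/-- A Schröder path of semilength `n`. -/
def IsSchroder (n : ℕ) (P : List SStep) : Prop :=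
  (P.map swidth).sum = 2 * n ∧ (P.map shc).sum = 0 ∧
  ∀ i : ℕ, 0 ≤ ((P.take i).map shc).sum

/-- Schröder paths of semilength `n` without triple descents. -/
def SchP (n : ℕ) : Set (List SStep) :=
  {P | IsSchroder n P ∧ ¬ [SStep.d, SStep.d, SStep.d] <:+: P}

/-- Number of `h` letters preceded by a prefix of total height-change `0`. -/
noncomputable def scomp (P : List SStep) : ℕ :=
  Set.ncard {i : ℕ | P[i]? = some SStep.h ∧ ((P.take i).map shc).sum = 0}

/-- Number of `h` letters plus number of double descents. -/
noncomputable def shdd (P : List SStep) : ℕ :=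
  P.countP (fun s => decide (s = SStep.h)) +
    Set.ncard {i : ℕ | P[i]? = some SStep.d ∧ P[i + 1]? = some SStep.d}

/-- Number of peaks `ud`. -/
noncomputable def speak (P : List SStep) : ℕ :=
  Set.ncard {i : ℕ | P[i]? = some SStep.u ∧ P[i + 1]? = some SStep.d}

/-- Steps of a bicolored Dyck path: up, red down, black down. -/
inductive BStep : Type
  | u | dR | dB
deriving DecidableEq

/-- A restricted bicolored Dyck path of semilength `n`:
`u^{i_1} dR^{j_1} dB^{k_1} ⋯ u^{i_{ℓ-1}} dR^{j_{ℓ-1}} dB^{k_{ℓ-1}} u^{i_ℓ} dR^{j_ℓ}`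
with positive `i`'s and `k`'s, `∑ i = n`, `∑ j + ∑ k = n`, and every prefix having
at least as many `u`'s as down steps. -/
def IsRBD (n : ℕ) (B : List BStep) : Prop :=
  (∃ (blocks : List (ℕ × ℕ × ℕ)) (iL jL : ℕ),
    (∀ t ∈ blocks, 1 ≤ t.1 ∧ 1 ≤ t.2.2) ∧ 1 ≤ iL ∧
    B = (blocks.map (fun t =>
        List.replicate t.1 BStep.u ++ List.replicate t.2.1 BStep.dR ++
          List.replicate t.2.2 BStep.dB)).flatten ++
        (List.replicate iL BStep.u ++ List.replicate jL BStep.dR) ∧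
    (blocks.map (fun t => t.1)).sum + iL = n ∧
    (blocks.map (fun t => t.2.1)).sum + jL + (blocks.map (fun t => t.2.2)).sum = n) ∧
  ∀ i : ℕ, (B.take i).countP (fun s => decide (s ≠ BStep.u)) ≤
    (B.take i).countP (fun s => decide (s = BStep.u))

/-- The length of the final run of red down steps. -/
def blast (B : List BStep) : ℕ := (B.reverse.takeWhile (fun s => decide (s = BStep.dR))).length

/-- The number of double ascents `uu`. -/
noncomputable def bdasc (B : List BStep) : ℕ :=
  Set.ncard {i : ℕ | B[i]? = some BStep.u ∧ B[i + 1]? = some BStep.u}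

/-- The number of occurrences of `u dB u` or `dR dB u`. -/
noncomputable def bbval (B : List BStep) : ℕ :=
  Set.ncard {i : ℕ | (B[i]? = some BStep.u ∨ B[i]? = some BStep.dR) ∧
    B[i + 1]? = some BStep.dB ∧ B[i + 2]? = some BStep.u}

/-- `π : ℕ → ℕ` encodes a permutation of `{1,…,N}`, with value `0` outside
(in particular `π 0 = 0`). -/
def IsPermOn (N : ℕ) (π : ℕ → ℕ) : Prop :=
  Set.BijOn π (Set.Icc 1 N) (Set.Icc 1 N) ∧ ∀ i, i ∉ Set.Icc 1 N → π i = 0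

/-- `π` contains the pattern given by the word `σ`. -/
def ContainsPat (N : ℕ) (π : ℕ → ℕ) (σ : List ℕ) : Prop :=
  ∃ f : Fin σ.length → ℕ, StrictMono f ∧ (∀ t, f t ∈ Set.Icc 1 N) ∧
    ∀ s t : Fin σ.length, π (f s) < π (f t) ↔ σ.get s < σ.get t

/-- Permutations of `{1,…,N}` avoiding the patterns `2341`, `2431` and `3241`. -/
def PermSet (N : ℕ) : Set (ℕ → ℕ) :=
  {π | IsPermOn N π ∧ ¬ContainsPat N π [2, 3, 4, 1] ∧ ¬ContainsPat N π [2, 4, 3, 1] ∧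
    ¬ContainsPat N π [3, 2, 4, 1]}

/-- `block(π)`: the number of `j ∈ {1,…,N}` with `{π(1),…,π(j)} = {1,…,j}`. -/
noncomputable def blockStat (N : ℕ) (π : ℕ → ℕ) : ℕ :=
  Set.ncard {j : ℕ | 1 ≤ j ∧ j ≤ N ∧ π '' Set.Icc 1 j = Set.Icc 1 j}

/-- `asc(π)`: the number of ascents of `π`. -/
noncomputable def ascStat (N : ℕ) (π : ℕ → ℕ) : ℕ :=
  Set.ncard {i : ℕ | 1 ≤ i ∧ i + 1 ≤ N ∧ π i < π (i + 1)}

/-- `crit(π)`: the number of critical entries of `π`. -/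
noncomputable def critStat (N : ℕ) (π : ℕ → ℕ) : ℕ :=
  Set.ncard {i : ℕ | 1 ≤ i ∧ i ≤ N ∧ ∀ j k : ℕ, 1 ≤ j → j < i → i < k → k ≤ N →
    π j < π i → π k < π i → π j < π k}

/-- An inversion sequence: `0 ≤ e_i < i` (1-indexed). -/
def IsInvSeq (e : List ℕ) : Prop := ∀ i : Fin e.length, e.get i < i.val + 1

/-- `e` contains the pattern `101`. -/
def Contains101 (e : List ℕ) : Prop :=
  ∃ i j k : Fin e.length, i < j ∧ j < k ∧ e.get j < e.get i ∧ e.get i = e.get k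

/-- `e` contains the pattern `102`. -/
def Contains102 (e : List ℕ) : Prop :=
  ∃ i j k : Fin e.length, i < j ∧ j < k ∧ e.get j < e.get i ∧ e.get i < e.get k

/-- `e` contains the pattern `021`. -/
def Contains021 (e : List ℕ) : Prop :=
  ∃ i j k : Fin e.length, i < j ∧ j < k ∧ e.get i < e.get k ∧ e.get k < e.get j

/-- Inversion sequences of length `n` avoiding `101` and `102`. -/
def ISet (n : ℕ) : Set (List ℕ) :=
  {e | e.length = n ∧ IsInvSeq e ∧ ¬Contains101 e ∧ ¬Contains102 e}

/-- Inversion sequences of length `n` avoiding `101` and `021`. -/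
def JSet (n : ℕ) : Set (List ℕ) :=
  {e | e.length = n ∧ IsInvSeq e ∧ ¬Contains101 e ∧ ¬Contains021 e}

/-- The largest entry of `e` (`0` for the empty sequence). -/
def maxVal (e : List ℕ) : ℕ := e.foldr max 0

/-- The largest (1-indexed) position of the maximal entry of `e`. -/
def maxid (e : List ℕ) : ℕ := e.length - e.reverse.idxOf (maxVal e)

/-- `e` with the entry at position `maxid e` removed. -/
def ehat (e : List ℕ) : List ℕ := e.eraseIdx (maxid e - 1)

/-- `omi(e)`: the number of `i ∈ {1,…,n}` not occurring as an entry of `e`. -/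
noncomputable def omi (e : List ℕ) : ℕ := Set.ncard {i : ℕ | 1 ≤ i ∧ i ≤ e.length ∧ i ∉ e}

/-- `cons(e)`: the number of `i ∈ {1,…,n-1}` such that both `i-1` and `i` occur in `e`. -/
noncomputable def consStat (e : List ℕ) : ℕ :=
  Set.ncard {i : ℕ | 1 ≤ i ∧ i + 1 ≤ e.length ∧ (i - 1) ∈ e ∧ i ∈ e}

/-- `first(e)`: the length of the initial run of zeros of `e`. -/
def firstStat (e : List ℕ) : ℕ := (e.takeWhile (fun v => decide (v = 0))).length

/-- `single(e)`: the number of positive integers occurring exactly once in `e`. -/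
noncomputable def singleStat (e : List ℕ) : ℕ := Set.ncard {v : ℕ | 1 ≤ v ∧ e.count v = 1}

/-- The binomial coefficient `C(p,q)`, interpreted as `0` unless `0 ≤ q ≤ p`. -/
def C (p q : ℤ) : ℤ := if 0 ≤ q ∧ q ≤ p then (p.toNat.choose q.toNat : ℤ) else 0



/-!
The paper's involution `φ_F` acts on steps by `(a, b) ↦ (2 - b, 2 - a)`, fixing the north
step `(0, 1)`. On `F`-steps this is an involution preserving `b - a` and the north steps.
Applied letterwise it therefore preserves the height, the prefix condition and `north`, and
since a non-north step with `a = 1` becomes a non-north step with `b = 1`, it exchanges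
`aone` with `bone - north`.
-/

lemma List.countP_eq_countP_add_countP {α : Type*} {p q r : α → Bool} (l : List α)
    (hp : ∀ a ∈ l, p a = (q a || r a)) (hqr : ∀ a ∈ l, ¬(q a ∧ r a)) :
    l.countP p = l.countP q + l.countP r := by
  induction l with
  | nil => rfl
  | cons a l ih =>
    simp only [List.mem_cons, forall_eq_or_imp] at hp hqr
    simp only [List.countP_cons, ih hp.2 hqr.2, hp.1]
    revert hqr
    cases q a <;> cases r a <;> simp <;> omega

def fStepFlip (s : ℤ × ℤ) : ℤ × ℤ := if s = (0, 1) then s else (2 - s.2, 2 - s.1)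

lemma fStepFlip_snd_sub_fst (s : ℤ × ℤ) :
    (fStepFlip s).2 - (fStepFlip s).1 = s.2 - s.1 := by
  unfold fStepFlip; split_ifs <;> simp

lemma fStepFlip_snd_eq_one_iff (s : ℤ × ℤ) :
    (fStepFlip s).2 = 1 ↔ s = (0, 1) ∨ s.1 = 1 := by
  unfold fStepFlip; split_ifs with h <;> simp [h]; omega

lemma fStepFlip_eq_north_iff {s : ℤ × ℤ} (hs : IsFStep s) :
    fStepFlip s = (0, 1) ↔ s = (0, 1) := by
  unfold fStepFlip; split_ifs with h
  · simp [h]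
  · rcases hs with hs | hs
    · exact absurd hs h
    · simp only [Prod.ext_iff, h, iff_false]; omega

lemma IsFStep.fStepFlip {s : ℤ × ℤ} (hs : IsFStep s) : IsFStep (fStepFlip s) := by
  unfold _root_.fStepFlip; split_ifs
  · exact hs
  · rcases hs with hs | hs
    · simp_all
    · right; dsimp; omega

lemma fStepFlip_fStepFlip {s : ℤ × ℤ} (hs : IsFStep s) : fStepFlip (fStepFlip s) = s := by
  by_cases h : s = (0, 1)
  · simp [fStepFlip, h]
  · have h' : fStepFlip s ≠ (0, 1) := (fStepFlip_eq_north_iff hs).not.mpr h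
    rw [fStepFlip, if_neg h', fStepFlip, if_neg h]
    simp

def fPathFlip (Q : List (ℤ × ℤ)) : List (ℤ × ℤ) := Q.map fStepFlip

lemma fheight_eq_sum (Q : List (ℤ × ℤ)) : fheight Q = (Q.map fun s => s.2 - s.1).sum := by
  induction Q with
  | nil => rfl
  | cons s Q ih => simp only [fheight, List.map_cons, List.sum_cons] at ih ⊢; linarith

lemma fheight_fPathFlip (Q : List (ℤ × ℤ)) : fheight (fPathFlip Q) = fheight Q := by
  simp only [fheight_eq_sum, fPathFlip, List.map_map, Function.comp_def,
    fStepFlip_snd_sub_fst]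

lemma isFPath_iff (Q : List (ℤ × ℤ)) :
    IsFPath Q ↔ (∀ s ∈ Q, IsFStep s) ∧ ∀ i, 0 ≤ fheight (Q.take i) := by
  simp only [IsFPath, fheight, sub_nonneg]

lemma IsFPath.fPathFlip {Q : List (ℤ × ℤ)} (hQ : IsFPath Q) : IsFPath (fPathFlip Q) := by
  rw [isFPath_iff] at hQ ⊢
  refine ⟨?_, fun i => ?_⟩
  · simp only [_root_.fPathFlip, List.mem_map]
    rintro _ ⟨s, hs, rfl⟩
    exact (hQ.1 s hs).fStepFlip
  · rw [_root_.fPathFlip, ← List.map_take]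
    exact (fheight_fPathFlip _).symm ▸ hQ.2 i

lemma fPathFlip_fPathFlip {Q : List (ℤ × ℤ)} (hQ : ∀ s ∈ Q, IsFStep s) :
    fPathFlip (fPathFlip Q) = Q := by
  rw [fPathFlip, fPathFlip, List.map_map]
  exact List.map_congr_left (fun s hs => fStepFlip_fStepFlip (hQ s hs)) |>.trans Q.map_id

lemma fnorth_fPathFlip {Q : List (ℤ × ℤ)} (hQ : ∀ s ∈ Q, IsFStep s) :
    fnorth (fPathFlip Q) = fnorth Q := by
  rw [fnorth, fPathFlip, List.countP_map]
  exact List.countP_congr fun s hs => by simp [fStepFlip_eq_north_iff (hQ s hs)]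

lemma fbone_fPathFlip (Q : List (ℤ × ℤ)) : fbone (fPathFlip Q) = fnorth Q + faone Q := by
  rw [fbone, fPathFlip, List.countP_map]
  refine Q.countP_eq_countP_add_countP (fun s _ => ?_) (fun s _ => ?_)
  · simp [fStepFlip_snd_eq_one_iff]
  · simp only [decide_eq_true_eq, not_and]
    rintro rfl
    simp

lemma fPathFlip_mem_fPaths {n : ℕ} {Q : List (ℤ × ℤ)} (hQ : Q ∈ FPaths n) :
    fPathFlip Q ∈ FPaths n :=
  ⟨(Q.length_map _).trans hQ.1, hQ.2.fPathFlip⟩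

lemma faone_fPathFlip {Q : List (ℤ × ℤ)} (hQ : ∀ s ∈ Q, IsFStep s) :
    (faone (fPathFlip Q) : ℤ) = fbone Q - fnorth Q := by
  have hbone := fbone_fPathFlip (fPathFlip Q)
  rw [fPathFlip_fPathFlip hQ, fnorth_fPathFlip hQ] at hbone
  rw [hbone]
  push_cast
  ring

/-- The involution `φ_F` shows that `(height, north, aone)` and
`(height, north, bone - north)` are equidistributed on `F_n`. -/
theorem aone_bone_equidistributed (n m ℓ h : ℕ) :
    ({Q ∈ FPaths n | fheight Q = (m : ℤ) ∧ fnorth Q = ℓ ∧ faone Q = h}).ncard =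
    ({Q ∈ FPaths n | fheight Q = (m : ℤ) ∧ fnorth Q = ℓ ∧
        (fbone Q : ℤ) - (fnorth Q : ℤ) = (h : ℤ)}).ncard := by
  have hinv {Q : List (ℤ × ℤ)} (hQ : Q ∈ FPaths n) : fPathFlip (fPathFlip Q) = Q :=
    fPathFlip_fPathFlip hQ.2.1
  refine Set.BijOn.ncard_eq (f := fPathFlip) <| Set.InvOn.bijOn
    ⟨fun Q hQ => hinv hQ.1, fun Q hQ => hinv hQ.1⟩ ?_ ?_
  · rintro Q ⟨hQ, hm, hl, hh⟩
    have hsteps := hQ.2.1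
    refine ⟨fPathFlip_mem_fPaths hQ, ?_, ?_, ?_⟩
    · rwa [fheight_fPathFlip]
    · rwa [fnorth_fPathFlip hsteps]
    · rw [fbone_fPathFlip, fnorth_fPathFlip hsteps, hh]
      push_cast
      ring
  · rintro Q ⟨hQ, hm, hl, hh⟩
    have hsteps := hQ.2.1
    refine ⟨fPathFlip_mem_fPaths hQ, ?_, ?_, ?_⟩
    · rwa [fheight_fPathFlip]
    · rwa [fnorth_fPathFlip hsteps]
    · exact_mod_cast (faone_fPathFlip hsteps).trans hh
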